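/- arXiv:quant-ph/0504050 — 5 statements merged into one kernel-verified Lean document; each statement's English description precedes it below -/
import Mathlib

section
/- Let H be a self-adjoint operator with all eigenvalues ≥ λ₊ on the range of an orthogonal projection Π₊ (i.e. Π₊HΠ₊ ≥ λ₊Π₊ on ran Π₊ and HΠ₊ = Π₊H), let H̃ = H + V, and let Π̃ be a spectral projection of H̃ with ‖H̃Π̃‖ ≤ c for some c < λ₊. Then ‖Π₊Π̃‖ ≤ ‖V‖/(λ₊ − c). -/
/-!
Put `t = Π₊ Π̃`. Since `Π₊` commutes with `H` and `Π̃` with `H̃`, the commutations give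
`(Π₊ H Π₊) t = t (H̃ Π̃) - Π₊ V Π̃`, so `‖(Π₊ H Π₊) t‖ ≤ c ‖t‖ + ‖V‖`. On the other hand
`Π₊ H Π₊ ⪰ λ₊ Π₊` and `Π₊ t = t` give `λ₊ t* t ≤ t* (Π₊ H Π₊) t`, and taking norms in the
C⋆-algebra yields `λ₊ ‖t‖ ≤ ‖(Π₊ H Π₊) t‖`. Hence `λ₊ ‖t‖ ≤ c ‖t‖ + ‖V‖`.
-/

open scoped Matrix.Norms.L2Operator ComplexOrder MatrixOrder

lemma compression_mul_mul_eq_mul_sub {R : Type*} [NonUnitalRing R] {p q h v : R}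
    (hp : IsIdempotentElem p) (hq : IsIdempotentElem q)
    (hhp : Commute h p) (hkq : Commute (h + v) q) :
    p * h * p * (p * q) = p * q * ((h + v) * q) - p * v * q := by
  have hphp : p * h * p * (p * q) = p * h * q := by
    rw [mul_assoc, ← mul_assoc p p q, hp.eq, mul_assoc p h, ← mul_assoc h, hhp.eq,
      ← mul_assoc, ← mul_assoc, hp.eq]
  have hqkq : p * q * ((h + v) * q) = p * (h + v) * q := by
    rw [mul_assoc, ← mul_assoc q, ← hkq.eq, mul_assoc, hq.eq, mul_assoc]
  rw [hphp, hqkq, mul_add, add_mul, add_sub_cancel_right]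

section CStarAlgebra

variable {A : Type*} [NonUnitalCStarAlgebra A] [PartialOrder A] [StarOrderedRing A]

lemma CStarAlgebra.mul_norm_le_norm_mul_of_smul_le_conj {a t : A} {r : ℝ} (hr : 0 ≤ r)
    (h : (r : ℂ) • (star t * t) ≤ star t * a * t) : r * ‖t‖ ≤ ‖a * t‖ := by
  have hnonneg : 0 ≤ (r : ℂ) • (star t * t) :=
    smul_nonneg (Complex.zero_le_real.mpr hr) (star_mul_self_nonneg t)
  have hsq : r * ‖t‖ * ‖t‖ ≤ ‖t‖ * ‖a * t‖ :=
    calc r * ‖t‖ * ‖t‖ = ‖(r : ℂ) • (star t * t)‖ := by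
          rw [norm_smul, CStarRing.norm_star_mul_self, Complex.norm_real, Real.norm_of_nonneg hr,
            mul_assoc]
      _ ≤ ‖star t * a * t‖ := CStarAlgebra.norm_le_norm_of_nonneg_of_le hnonneg h
      _ ≤ ‖t‖ * ‖a * t‖ := by rw [mul_assoc, ← norm_star t]; exact norm_mul_le _ _
  rcases (norm_nonneg t).eq_or_lt with ht | ht
  · rw [← ht, mul_zero]; exact norm_nonneg _
  · exact le_of_mul_le_mul_right (by linarith) ht

theorem IsStarProjection.norm_mul_le_div_of_gap {p q h v : A} {r c : ℝ}
    (hp : IsStarProjection p) (hq : IsStarProjection q) (hhp : Commute h p)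
    (hge : (r : ℂ) • p ≤ p * h * p) (hkq : Commute (h + v) q)
    (hc : ‖(h + v) * q‖ ≤ c) (hcr : c < r) :
    ‖p * q‖ ≤ ‖v‖ / (r - c) := by
  set t := p * q
  have hc0 : 0 ≤ c := (norm_nonneg _).trans hc
  have hpt : p * t = t := by rw [← mul_assoc, hp.isIdempotentElem.eq]
  have hconj : (r : ℂ) • (star t * t) ≤ star t * (p * h * p) * t := by
    simpa only [mul_smul_comm, smul_mul_assoc, mul_assoc, hpt] using
      star_left_conjugate_le_conjugate hge t
  have hlower : r * ‖t‖ ≤ ‖p * h * p * t‖ :=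
    CStarAlgebra.mul_norm_le_norm_mul_of_smul_le_conj (hc0.trans hcr.le) hconj
  have hpvq : ‖p * v * q‖ ≤ ‖v‖ :=
    calc ‖p * v * q‖ ≤ ‖p‖ * ‖v‖ * ‖q‖ := norm_mul₃_le
      _ ≤ 1 * ‖v‖ * 1 := by
          gcongr
          exacts [hp.norm_le, hq.norm_le]
      _ = ‖v‖ := by ring
  have hupper : ‖p * h * p * t‖ ≤ c * ‖t‖ + ‖v‖ :=
    calc ‖p * h * p * t‖ = ‖t * ((h + v) * q) - p * v * q‖ :=
          congrArg norm <|
            compression_mul_mul_eq_mul_sub hp.isIdempotentElem hq.isIdempotentElem hhp hkq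
      _ ≤ ‖t‖ * ‖(h + v) * q‖ + ‖p * v * q‖ :=
          (norm_sub_le _ _).trans (by gcongr; exact norm_mul_le _ _)
      _ ≤ c * ‖t‖ + ‖v‖ := by rw [mul_comm c]; gcongr
  rw [le_div_iff₀ (by linarith), mul_sub]
  linarith

end CStarAlgebra

open Matrix in

theorem overlap_of_spectral_projections_general {n : Type*} [Fintype n] [DecidableEq n]
    (H V Pp Pit : Matrix n n ℂ) (lamp c : ℝ)
    (hPp : Pp.IsHermitian) (hPp' : Pp * Pp = Pp)
    (hHPp : H * Pp = Pp * H)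
    (hge : (Pp * H * Pp - (lamp : ℂ) • Pp).PosSemidef)
    (hPit : Pit.IsHermitian) (hPit' : Pit * Pit = Pit)
    (hcomm : (H + V) * Pit = Pit * (H + V))
    (hc : ‖(H + V) * Pit‖ ≤ c) (hclam : c < lamp) :
    ‖Pp * Pit‖ ≤ ‖V‖ / (lamp - c) :=
  IsStarProjection.norm_mul_le_div_of_gap ⟨hPp', hPp.isSelfAdjoint⟩ ⟨hPit', hPit.isSelfAdjoint⟩
    hHPp (Matrix.le_iff.mpr hge) hcomm hc hclam

/-- Let `H` be self-adjoint commuting with the orthogonal projection `Π₊`, with all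
eigenvalues of `H` on the range of `Π₊` at least `λ₊` (i.e. `Π₊ H Π₊ ⪰ λ₊ Π₊`).
Let `H̃ = H + V` and let `Π̃` be an orthogonal spectral projection of `H̃` with
`‖H̃ Π̃‖ ≤ c < λ₊`.  Then `‖Π₊ Π̃‖ ≤ ‖V‖ / (λ₊ - c)`. -/
theorem overlap_of_spectral_projections {n : Type*} [Fintype n] [DecidableEq n]
    (H V Pp Pit : Matrix n n ℂ) (lamp c : ℝ)
    (hH : H.IsHermitian) (hV : V.IsHermitian)
    (hPp : Pp.IsHermitian) (hPp' : Pp * Pp = Pp)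
    (hHPp : H * Pp = Pp * H)
    (hge : (Pp * H * Pp - (lamp : ℂ) • Pp).PosSemidef)
    (hPit : Pit.IsHermitian) (hPit' : Pit * Pit = Pit)
    (hcomm : (H + V) * Pit = Pit * (H + V))
    (hc : ‖(H + V) * Pit‖ ≤ c) (hclam : c < lamp) :
    ‖Pp * Pit‖ ≤ ‖V‖ / (lamp - c) :=
  overlap_of_spectral_projections_general H V Pp Pit lamp c hPp hPp' hHPp hge hPit hPit' hcomm hc
    hclam
end

section
/- Let H̃ be self-adjoint on ℂᴺ and Π an orthogonal projection. If Π̃ is a spectral projection of H̃ (Π̃H̃ = H̃Π̃), Π₊ = I − Π is a spectral projection of a self-adjoint H with all eigenvalues of H on ran Π₊ at least λ₊, H̃ = H + V, and ‖H̃Π̃‖ ≤ c < λ₊, then ‖Π̃H̃Π̃ − Π(Π̃H̃Π̃)Π‖ ≤ 3c‖V‖/(λ₊ − c). -/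
open scoped Matrix.Norms.L2Operator ComplexOrder

open Matrix

private lemma l2_opNorm_le_bound' {n : Type*} [Fintype n] [DecidableEq n]
    (A : Matrix n n ℂ) {K : ℝ} (hK : 0 ≤ K)
    (h : ∀ y : n → ℂ, ‖(WithLp.equiv 2 (n → ℂ)).symm (A *ᵥ y)‖ ≤
      K * ‖(WithLp.equiv 2 (n → ℂ)).symm y‖) : ‖A‖ ≤ K := by
  rw [Matrix.l2_opNorm_def]
  apply ContinuousLinearMap.opNorm_le_bound _ hK
  intro x
  simpa [Matrix.toEuclideanLin_apply] using h (WithLp.equiv 2 (n → ℂ) x)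

private lemma claimA {n : Type*} [Fintype n] [DecidableEq n]
    (H Pi Pit : Matrix n n ℂ) (lamp : ℝ) (hlamp : 0 < lamp)
    (hPi : Pi.IsHermitian) (hPi' : Pi * Pi = Pi)
    (hge : ((1 - Pi) * H * (1 - Pi) - (lamp : ℂ) • (1 - Pi)).PosSemidef) :
    lamp * ‖(1 - Pi) * Pit‖ ≤ ‖(1 - Pi) * H * ((1 - Pi) * Pit)‖ := by
  have hQherm : (1 - Pi)ᴴ = 1 - Pi := by
    simp [Matrix.conjTranspose_sub, hPi.eq]
  have hQQ : (1 - Pi) * (1 - Pi) = 1 - Pi := by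
    simp only [sub_mul, mul_sub, one_mul, mul_one, hPi']
    abel
  have hmove : ∀ (a b : n → ℂ), star a ⬝ᵥ ((1 - Pi) *ᵥ b) = star ((1 - Pi) *ᵥ a) ⬝ᵥ b := by
    intro a b
    rw [star_mulVec, hQherm, dotProduct_mulVec]
  rw [show lamp * ‖(1 - Pi) * Pit‖ = ‖(1 - Pi) * Pit‖ * lamp from mul_comm _ _,
    ← le_div_iff₀ hlamp]
  apply l2_opNorm_le_bound' _ (by positivity)
  intro y
  -- notation
  have hpos := hge.dotProduct_mulVec_nonneg (Pit *ᵥ y)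
  have hre : 0 ≤ (star (Pit *ᵥ y) ⬝ᵥ
      (((1 - Pi) * H * (1 - Pi) - (lamp : ℂ) • (1 - Pi)) *ᵥ (Pit *ᵥ y))).re := by
    rw [Complex.le_def] at hpos; exact hpos.1
  have hQw : (1 - Pi) *ᵥ (((1 - Pi) * Pit) *ᵥ y) = ((1 - Pi) * Pit) *ᵥ y := by
    rw [mulVec_mulVec, ← mul_assoc, hQQ]
  have hwx : (1 - Pi) *ᵥ (Pit *ᵥ y) = ((1 - Pi) * Pit) *ᵥ y := by
    rw [mulVec_mulVec]
  have hL : star (Pit *ᵥ y) ⬝ᵥ ((1 - Pi) *ᵥ (Pit *ᵥ y)) =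
      star (((1 - Pi) * Pit) *ᵥ y) ⬝ᵥ (((1 - Pi) * Pit) *ᵥ y) := by
    calc star (Pit *ᵥ y) ⬝ᵥ ((1 - Pi) *ᵥ (Pit *ᵥ y))
        = star (Pit *ᵥ y) ⬝ᵥ ((1 - Pi) *ᵥ ((1 - Pi) *ᵥ (Pit *ᵥ y))) := by
          rw [hwx, hQw]
      _ = star ((1 - Pi) *ᵥ (Pit *ᵥ y)) ⬝ᵥ ((1 - Pi) *ᵥ (Pit *ᵥ y)) := hmove _ _
      _ = star (((1 - Pi) * Pit) *ᵥ y) ⬝ᵥ (((1 - Pi) * Pit) *ᵥ y) := by rw [hwx]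
  have hR : star (Pit *ᵥ y) ⬝ᵥ (((1 - Pi) * H * (1 - Pi)) *ᵥ (Pit *ᵥ y)) =
      star (((1 - Pi) * Pit) *ᵥ y) ⬝ᵥ (((1 - Pi) * H * ((1 - Pi) * Pit)) *ᵥ y) := by
    calc star (Pit *ᵥ y) ⬝ᵥ (((1 - Pi) * H * (1 - Pi)) *ᵥ (Pit *ᵥ y))
        = star (Pit *ᵥ y) ⬝ᵥ ((1 - Pi) *ᵥ (H *ᵥ ((1 - Pi) *ᵥ (Pit *ᵥ y)))) := by
          simp only [mulVec_mulVec, Matrix.mul_assoc]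
      _ = star ((1 - Pi) *ᵥ (Pit *ᵥ y)) ⬝ᵥ (H *ᵥ ((1 - Pi) *ᵥ (Pit *ᵥ y))) := hmove _ _
      _ = star (((1 - Pi) * Pit) *ᵥ y) ⬝ᵥ (H *ᵥ (((1 - Pi) * Pit) *ᵥ y)) := by rw [hwx]
      _ = star ((1 - Pi) *ᵥ (((1 - Pi) * Pit) *ᵥ y)) ⬝ᵥ (H *ᵥ (((1 - Pi) * Pit) *ᵥ y)) := by
          rw [hQw]
      _ = star (((1 - Pi) * Pit) *ᵥ y) ⬝ᵥ ((1 - Pi) *ᵥ (H *ᵥ (((1 - Pi) * Pit) *ᵥ y))) :=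
          (hmove _ _).symm
      _ = star (((1 - Pi) * Pit) *ᵥ y) ⬝ᵥ (((1 - Pi) * H * ((1 - Pi) * Pit)) *ᵥ y) := by
          simp only [mulVec_mulVec, Matrix.mul_assoc]
  have hsplit : star (Pit *ᵥ y) ⬝ᵥ
      (((1 - Pi) * H * (1 - Pi) - (lamp : ℂ) • (1 - Pi)) *ᵥ (Pit *ᵥ y)) =
      star (((1 - Pi) * Pit) *ᵥ y) ⬝ᵥ (((1 - Pi) * H * ((1 - Pi) * Pit)) *ᵥ y) -
      (lamp : ℂ) * (star (((1 - Pi) * Pit) *ᵥ y) ⬝ᵥ (((1 - Pi) * Pit) *ᵥ y)) := by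
    rw [sub_mulVec, dotProduct_sub, hR, smul_mulVec, dotProduct_smul, hL]
    simp [smul_eq_mul]
  rw [hsplit] at hre
  set w' : EuclideanSpace ℂ n := (WithLp.equiv 2 (n → ℂ)).symm (((1 - Pi) * Pit) *ᵥ y) with hw'
  set u' : EuclideanSpace ℂ n :=
    (WithLp.equiv 2 (n → ℂ)).symm (((1 - Pi) * H * ((1 - Pi) * Pit)) *ᵥ y) with hu'
  set y' : EuclideanSpace ℂ n := (WithLp.equiv 2 (n → ℂ)).symm y with hy'
  have hww : (star (((1 - Pi) * Pit) *ᵥ y) ⬝ᵥ (((1 - Pi) * Pit) *ᵥ y)).re = ‖w'‖ ^ 2 := by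
    have := inner_self_eq_norm_sq (𝕜 := ℂ) w'
    rw [hw', WithLp.equiv_symm_apply, EuclideanSpace.inner_toLp_toLp, dotProduct_comm] at this
    exact this
  have hwu : (star (((1 - Pi) * Pit) *ᵥ y) ⬝ᵥ
      (((1 - Pi) * H * ((1 - Pi) * Pit)) *ᵥ y)).re ≤ ‖w'‖ * ‖u'‖ := by
    have := re_inner_le_norm (𝕜 := ℂ) w' u'
    rw [hw', hu', WithLp.equiv_symm_apply, EuclideanSpace.inner_toLp_toLp, dotProduct_comm] at this
    exact this
  have huC : ‖u'‖ ≤ ‖(1 - Pi) * H * ((1 - Pi) * Pit)‖ * ‖y'‖ :=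
    Matrix.l2_opNorm_mulVec _ y'
  have hre2 : lamp * ‖w'‖ ^ 2 ≤ ‖w'‖ * (‖(1 - Pi) * H * ((1 - Pi) * Pit)‖ * ‖y'‖) := by
    have h1 : ((lamp : ℂ) * (star (((1 - Pi) * Pit) *ᵥ y) ⬝ᵥ (((1 - Pi) * Pit) *ᵥ y))).re =
        lamp * ‖w'‖ ^ 2 := by
      rw [Complex.mul_re]
      rw [hww]
      simp [Complex.ofReal_re, Complex.ofReal_im, hww]
    have h2 : lamp * ‖w'‖ ^ 2 ≤ (star (((1 - Pi) * Pit) *ᵥ y) ⬝ᵥ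
        (((1 - Pi) * H * ((1 - Pi) * Pit)) *ᵥ y)).re := by
      have := hre
      rw [Complex.sub_re, h1] at this
      linarith
    calc lamp * ‖w'‖ ^ 2 ≤ _ := h2
      _ ≤ ‖w'‖ * ‖u'‖ := hwu
      _ ≤ ‖w'‖ * (‖(1 - Pi) * H * ((1 - Pi) * Pit)‖ * ‖y'‖) :=
          mul_le_mul_of_nonneg_left huC (norm_nonneg _)
  show ‖w'‖ ≤ ‖(1 - Pi) * H * ((1 - Pi) * Pit)‖ / lamp * ‖y'‖
  rcases eq_or_lt_of_le (norm_nonneg w') with h0 | h0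
  · rw [← h0]; positivity
  · have h3 : lamp * ‖w'‖ ≤ ‖(1 - Pi) * H * ((1 - Pi) * Pit)‖ * ‖y'‖ := by
      nlinarith [hre2, h0]
    rw [div_mul_eq_mul_div, le_div_iff₀ hlamp]
    linarith

private lemma proj_norm_le_one {n : Type*} [Fintype n] [DecidableEq n]
    {P : Matrix n n ℂ} (hP : P.IsHermitian) (hP' : P * P = P) : ‖P‖ ≤ 1 := by
  have h := Matrix.l2_opNorm_conjTranspose_mul_self P
  rw [hP.eq, hP'] at h
  nlinarith [norm_nonneg P]


/-- Combination of the projection-overlap bound and the three-term decomposition: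
`H` self-adjoint commuting with the orthogonal projection `Π` (`Π₋` in the paper),
with `H` restricted to `ran (I - Π)` having all eigenvalues `≥ λ₊`; `V` self-adjoint
with `H̃ = H + V`; `Π̃` an orthogonal spectral projection of `H̃` with
`‖H̃ Π̃‖ ≤ c < λ₊`.  Then the low-energy block `H̃_{<λ*} = Π̃ H̃ Π̃` satisfies
`‖H̃_{<λ*} - Π H̃_{<λ*} Π‖ ≤ 3 c ‖V‖ / (λ₊ - c)`. -/
theorem low_energy_block_close_to_compressed_block
    {n : Type*} [Fintype n] [DecidableEq n]
    (H V Pi Pit : Matrix n n ℂ) (lamp c : ℝ)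
    (hH : H.IsHermitian) (hV : V.IsHermitian)
    (hPi : Pi.IsHermitian) (hPi' : Pi * Pi = Pi)
    (hHPi : H * Pi = Pi * H)
    (hge : ((1 - Pi) * H * (1 - Pi) - (lamp : ℂ) • (1 - Pi)).PosSemidef)
    (hPit : Pit.IsHermitian) (hPit' : Pit * Pit = Pit)
    (hcomm : (H + V) * Pit = Pit * (H + V))
    (hc : ‖(H + V) * Pit‖ ≤ c) (hclam : c < lamp) :
    ‖Pit * (H + V) * Pit - Pi * (Pit * (H + V) * Pit) * Pi‖ ≤
      3 * c * ‖V‖ / (lamp - c) := by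
  have c0 : 0 ≤ c := (norm_nonneg _).trans hc
  have hlamp : (0 : ℝ) < lamp := lt_of_le_of_lt c0 hclam
  have hgap : (0 : ℝ) < lamp - c := by linarith
  have hQherm : (1 - Pi).IsHermitian := by
    unfold Matrix.IsHermitian
    simp [Matrix.conjTranspose_sub, hPi.eq]
  have hQQ : (1 - Pi) * (1 - Pi) = 1 - Pi := by
    simp only [sub_mul, mul_sub, one_mul, mul_one, hPi']; abel
  have hnormQ : ‖(1 : Matrix n n ℂ) - Pi‖ ≤ 1 := proj_norm_le_one hQherm hQQ
  have hnormPi : ‖Pi‖ ≤ 1 := proj_norm_le_one hPi hPi'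
  have hnormPit : ‖Pit‖ ≤ 1 := proj_norm_le_one hPit hPit'
  have hHt : (H + V).IsHermitian := hH.add hV
  -- ‖Pit * (H+V)‖ ≤ c
  have hPitHt : ‖Pit * (H + V)‖ ≤ c := by
    have : ((H + V) * Pit)ᴴ = Pit * (H + V) := by
      rw [Matrix.conjTranspose_mul, hHt.eq, hPit.eq]
    calc ‖Pit * (H + V)‖ = ‖((H + V) * Pit)ᴴ‖ := by rw [this]
      _ = ‖(H + V) * Pit‖ := Matrix.l2_opNorm_conjTranspose _
      _ ≤ c := hc
  -- ‖Pit * (1 - Pi)‖ = ‖(1 - Pi) * Pit‖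
  have hPitQ : ‖Pit * (1 - Pi)‖ = ‖(1 - Pi) * Pit‖ := by
    have : ((1 - Pi) * Pit)ᴴ = Pit * (1 - Pi) := by
      rw [Matrix.conjTranspose_mul, hQherm.eq, hPit.eq]
    rw [← this, Matrix.l2_opNorm_conjTranspose]
  -- Claim B identity
  have hBid : (1 - Pi) * H * ((1 - Pi) * Pit) =
      ((1 - Pi) * Pit) * ((H + V) * Pit) - (1 - Pi) * (V * Pit) := by
    have hQPi : (1 - Pi) * Pi = 0 := by simp [sub_mul, hPi']
    have hQH : (1 - Pi) * H * Pi = 0 := by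
      rw [mul_assoc, hHPi, ← mul_assoc, hQPi, zero_mul]
    have hA : Pit * ((H + V) * Pit) = (H + V) * Pit := by
      rw [← mul_assoc, ← hcomm, mul_assoc, hPit']
    calc (1 - Pi) * H * ((1 - Pi) * Pit)
        = (1 - Pi) * H * Pit - ((1 - Pi) * H * Pi) * Pit := by noncomm_ring
      _ = (1 - Pi) * H * Pit := by rw [hQH]; simp
      _ = (1 - Pi) * ((H + V) * Pit) - (1 - Pi) * (V * Pit) := by noncomm_ring
      _ = (1 - Pi) * (Pit * ((H + V) * Pit)) - (1 - Pi) * (V * Pit) := by rw [hA]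
      _ = ((1 - Pi) * Pit) * ((H + V) * Pit) - (1 - Pi) * (V * Pit) := by rw [mul_assoc]
  -- overlap bound: ‖(1 - Pi) * Pit‖ ≤ ‖V‖ / (lamp - c)
  have hB : ‖(1 - Pi) * Pit‖ ≤ ‖V‖ / (lamp - c) := by
    have h1 : lamp * ‖(1 - Pi) * Pit‖ ≤ ‖(1 - Pi) * H * ((1 - Pi) * Pit)‖ :=
      claimA H Pi Pit lamp hlamp hPi hPi' hge
    have h2 : ‖(1 - Pi) * H * ((1 - Pi) * Pit)‖ ≤ c * ‖(1 - Pi) * Pit‖ + ‖V‖ := by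
      rw [hBid]
      have e1 : ‖((1 - Pi) * Pit) * ((H + V) * Pit)‖ ≤ ‖(1 - Pi) * Pit‖ * c :=
        (Matrix.l2_opNorm_mul _ _).trans (mul_le_mul_of_nonneg_left hc (norm_nonneg _))
      have e2 : ‖(1 - Pi) * (V * Pit)‖ ≤ ‖V‖ := by
        have e3 : ‖V * Pit‖ ≤ ‖V‖ :=
          (Matrix.l2_opNorm_mul _ _).trans
            (mul_le_of_le_one_right (norm_nonneg _) hnormPit)
        calc ‖(1 - Pi) * (V * Pit)‖ ≤ ‖(1 : Matrix n n ℂ) - Pi‖ * ‖V * Pit‖ :=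
              Matrix.l2_opNorm_mul _ _
          _ ≤ 1 * ‖V‖ := mul_le_mul hnormQ e3 (norm_nonneg _) zero_le_one
          _ = ‖V‖ := one_mul _
      calc ‖((1 - Pi) * Pit) * ((H + V) * Pit) - (1 - Pi) * (V * Pit)‖
          ≤ ‖((1 - Pi) * Pit) * ((H + V) * Pit)‖ + ‖(1 - Pi) * (V * Pit)‖ :=
            norm_sub_le _ _
        _ ≤ ‖(1 - Pi) * Pit‖ * c + ‖V‖ := add_le_add e1 e2
        _ = c * ‖(1 - Pi) * Pit‖ + ‖V‖ := by ring
    rw [le_div_iff₀ hgap]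
    nlinarith
  -- three-term decomposition
  set A : Matrix n n ℂ := Pit * (H + V) * Pit with hA
  have hdecomp : A - Pi * A * Pi =
      (1 - Pi) * A * Pi + Pi * A * (1 - Pi) + (1 - Pi) * A * (1 - Pi) := by noncomm_ring
  have hQA : ‖(1 - Pi) * A‖ ≤ ‖(1 - Pi) * Pit‖ * c := by
    have : (1 - Pi) * A = ((1 - Pi) * Pit) * ((H + V) * Pit) := by
      rw [hA]; noncomm_ring
    rw [this]
    exact (Matrix.l2_opNorm_mul _ _).trans (mul_le_mul_of_nonneg_left hc (norm_nonneg _))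
  have hAQ : ‖A * (1 - Pi)‖ ≤ c * ‖(1 - Pi) * Pit‖ := by
    have : A * (1 - Pi) = (Pit * (H + V)) * (Pit * (1 - Pi)) := by
      rw [hA]; noncomm_ring
    rw [this]
    refine Matrix.l2_opNorm_mul _ _ |>.trans ?_
    rw [hPitQ]
    exact mul_le_mul_of_nonneg_right hPitHt (norm_nonneg _)
  have hBc : (0:ℝ) ≤ ‖(1 - Pi) * Pit‖ * c := mul_nonneg (norm_nonneg _) c0
  have hT1 : ‖(1 - Pi) * A * Pi‖ ≤ c * ‖(1 - Pi) * Pit‖ := by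
    calc ‖(1 - Pi) * A * Pi‖
        ≤ ‖(1 - Pi) * A‖ * ‖Pi‖ := Matrix.l2_opNorm_mul _ _
      _ ≤ (‖(1 - Pi) * Pit‖ * c) * 1 := mul_le_mul hQA hnormPi (norm_nonneg _) hBc
      _ = c * ‖(1 - Pi) * Pit‖ := by ring
  have hT2 : ‖Pi * A * (1 - Pi)‖ ≤ c * ‖(1 - Pi) * Pit‖ := by
    calc ‖Pi * A * (1 - Pi)‖ = ‖Pi * (A * (1 - Pi))‖ := by rw [mul_assoc]
      _ ≤ ‖Pi‖ * ‖A * (1 - Pi)‖ := Matrix.l2_opNorm_mul _ _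
      _ ≤ 1 * (c * ‖(1 - Pi) * Pit‖) :=
          mul_le_mul hnormPi hAQ (norm_nonneg _) zero_le_one
      _ = c * ‖(1 - Pi) * Pit‖ := by ring
  have hT3 : ‖(1 - Pi) * A * (1 - Pi)‖ ≤ c * ‖(1 - Pi) * Pit‖ := by
    calc ‖(1 - Pi) * A * (1 - Pi)‖ ≤ ‖(1 - Pi) * A‖ * ‖1 - Pi‖ := Matrix.l2_opNorm_mul _ _
      _ ≤ (‖(1 - Pi) * Pit‖ * c) * 1 := mul_le_mul hQA hnormQ (norm_nonneg _) hBc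
      _ = c * ‖(1 - Pi) * Pit‖ := by ring
  calc ‖A - Pi * A * Pi‖
      = ‖(1 - Pi) * A * Pi + Pi * A * (1 - Pi) + (1 - Pi) * A * (1 - Pi)‖ := by rw [hdecomp]
    _ ≤ ‖(1 - Pi) * A * Pi + Pi * A * (1 - Pi)‖ + ‖(1 - Pi) * A * (1 - Pi)‖ := norm_add_le _ _
    _ ≤ (‖(1 - Pi) * A * Pi‖ + ‖Pi * A * (1 - Pi)‖) + ‖(1 - Pi) * A * (1 - Pi)‖ :=
        add_le_add (norm_add_le _ _) le_rfl
    _ ≤ (c * ‖(1 - Pi) * Pit‖ + c * ‖(1 - Pi) * Pit‖) + c * ‖(1 - Pi) * Pit‖ :=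
        add_le_add (add_le_add hT1 hT2) hT3
    _ = 3 * c * ‖(1 - Pi) * Pit‖ := by ring
    _ ≤ 3 * c * (‖V‖ / (lamp - c)) :=
        mul_le_mul_of_nonneg_left hB (by linarith)
    _ = 3 * c * ‖V‖ / (lamp - c) := by ring
end

section
/- Let P_t, for t = 0,…,T, be orthogonal projections on a finite-dimensional Hilbert space such that, for t < T, each P_t is either the identity or a projection of the form |0⟩⟨0| on some tensor factor times identity (all these commute), and P_T is an arbitrary orthogonal projection with ⟨0,ψ|P_T|0,ψ⟩ ≤ ε for all unit vectors ψ supported on the input register (where |0,ψ⟩ denotes the common +1 eigenspace of P_0,…,P_{T−1}). Then max over unit ξ of (1/(T+1))·Σ_{t=0}^{T} ⟨ξ|P_t|ξ⟩ ≤ 1 − (1 − ε − √ε)/(T+1). -/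
open scoped InnerProductSpace

/-!
Let `Q` be the product of the commuting projections `P t`, `t < T`; its range lies in `L`.
Since `x - (p * q) x = (x - q x) + q (x - p x)` is an orthogonal splitting, induction gives the
union bound `‖ξ - Q ξ‖² ≤ ∑_{t<T} ‖ξ - P t ξ‖²`, so the first `T` terms of the sum are at most
`T - b²` with `b = ‖ξ - Q ξ‖`. On the other hand `Q ξ ∈ L`, so `‖P T ξ‖ ≤ √ε a + b` with
`a = ‖Q ξ‖` and `a² + b² = 1`; squaring gives `‖P T ξ‖² ≤ b² + ε + √ε`, and the `b²` cancel.
-/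

lemma re_inner_apply_self_le_mul_norm_sq {𝕜 E : Type*} [RCLike 𝕜] [NormedAddCommGroup E]
    [InnerProductSpace 𝕜 E] {r : E →L[𝕜] E} {L : Submodule 𝕜 E} {ε : ℝ}
    (h : ∀ φ ∈ L, ‖φ‖ = 1 → RCLike.re ⟪φ, r φ⟫_𝕜 ≤ ε) {φ : E} (hφ : φ ∈ L) :
    RCLike.re ⟪φ, r φ⟫_𝕜 ≤ ε * ‖φ‖ ^ 2 := by
  rcases eq_or_ne φ 0 with rfl | hφ0
  · simp
  set u : E := (‖φ‖⁻¹ : 𝕜) • φ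
  have hu : RCLike.re ⟪u, r u⟫_𝕜 ≤ ε := h u (L.smul_mem _ hφ) (norm_smul_inv_norm hφ0)
  have hφu : φ = (‖φ‖ : 𝕜) • u := by
    rw [smul_smul, mul_inv_cancel₀ (RCLike.ofReal_ne_zero.mpr (norm_ne_zero_iff.mpr hφ0)),
      one_smul]
  calc RCLike.re ⟪φ, r φ⟫_𝕜 = RCLike.re ⟪(‖φ‖ : 𝕜) • u, r ((‖φ‖ : 𝕜) • u)⟫_𝕜 := by rw [← hφu]
    _ = ‖φ‖ ^ 2 * RCLike.re ⟪u, r u⟫_𝕜 := by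
        rw [map_smul, inner_smul_left, inner_smul_right, ← mul_assoc, RCLike.conj_ofReal,
          ← RCLike.ofReal_mul, RCLike.re_ofReal_mul, sq]
    _ ≤ ε * ‖φ‖ ^ 2 := by rw [mul_comm]; gcongr

namespace IsStarProjection

variable {𝕜 E : Type*} [RCLike 𝕜] [NormedAddCommGroup E] [InnerProductSpace 𝕜 E] [CompleteSpace E]
  {p q r : E →L[𝕜] E}

lemma apply_apply (hp : IsStarProjection p) (x : E) : p (p x) = p x :=
  congr($(hp.isIdempotentElem) x)

lemma inner_apply_self (hp : IsStarProjection p) (x : E) : ⟪x, p x⟫_𝕜 = ⟪p x, p x⟫_𝕜 :=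
  calc ⟪x, p x⟫_𝕜 = ⟪x, p (p x)⟫_𝕜 := by rw [hp.apply_apply]
    _ = ⟪p x, p x⟫_𝕜 := (hp.isSelfAdjoint.isSymmetric x (p x)).symm

lemma re_inner_apply_self (hp : IsStarProjection p) (x : E) :
    RCLike.re ⟪x, p x⟫_𝕜 = ‖p x‖ ^ 2 := by
  rw [hp.inner_apply_self, inner_self_eq_norm_sq]

lemma norm_apply_le (hp : IsStarProjection p) (x : E) : ‖p x‖ ≤ ‖x‖ :=
  (p.le_opNorm x).trans (mul_le_of_le_one_left (norm_nonneg x) hp.norm_le)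

lemma norm_sq_apply_add_norm_sq_sub_apply (hp : IsStarProjection p) (x : E) :
    ‖p x‖ ^ 2 + ‖x - p x‖ ^ 2 = ‖x‖ ^ 2 := by
  have horth : ⟪p x, x - p x⟫_𝕜 = 0 :=
    calc ⟪p x, x - p x⟫_𝕜 = ⟪x, p (x - p x)⟫_𝕜 := hp.isSelfAdjoint.isSymmetric _ _
      _ = 0 := by rw [map_sub, hp.apply_apply, sub_self, inner_zero_right]
  simpa only [sq, add_sub_cancel] using
    (norm_add_sq_eq_norm_sq_add_norm_sq_of_inner_eq_zero _ _ horth).symm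

lemma re_inner_apply_self_eq_sub (hp : IsStarProjection p) (x : E) :
    RCLike.re ⟪x, p x⟫_𝕜 = ‖x‖ ^ 2 - ‖x - p x‖ ^ 2 := by
  rw [hp.re_inner_apply_self, ← hp.norm_sq_apply_add_norm_sq_sub_apply x, add_sub_cancel_right]

lemma norm_sq_sub_mul_apply_le (hq : IsStarProjection q) (hpq : Commute p q) (x : E) :
    ‖x - (p * q) x‖ ^ 2 ≤ ‖x - p x‖ ^ 2 + ‖x - q x‖ ^ 2 := by
  have hqpq : q * (p * q) = q * p := by
    rw [← mul_assoc, ← hpq.eq, mul_assoc, hq.isIdempotentElem.eq, hpq.eq]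
  have hproj : q (x - (p * q) x) = q (x - p x) := by
    simp only [map_sub, ← mul_apply_eq_comp, hqpq]
  have hcompl : x - (p * q) x - q (x - (p * q) x) = x - q x := by
    rw [hproj, map_sub, hpq.eq, mul_apply_eq_comp]; abel
  calc ‖x - (p * q) x‖ ^ 2 = ‖q (x - p x)‖ ^ 2 + ‖x - q x‖ ^ 2 := by
        rw [← hproj, ← hcompl, hq.norm_sq_apply_add_norm_sq_sub_apply]
    _ ≤ ‖x - p x‖ ^ 2 + ‖x - q x‖ ^ 2 := by
        gcongr; exact hq.norm_apply_le _

variable {l : List (E →L[𝕜] E)}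

lemma list_prod (hl : ∀ p ∈ l, IsStarProjection p) (hcomm : ∀ p ∈ l, ∀ q ∈ l, Commute p q) :
    IsStarProjection l.prod := by
  induction l with
  | nil => exact .one _
  | cons p l ih =>
    simp only [List.mem_cons, forall_eq_or_imp] at hl hcomm
    rw [List.prod_cons]
    exact hl.1.mul (ih hl.2 fun q hq r hr => (hcomm.2 q hq).2 r hr)
      (Commute.list_prod_right l p hcomm.1.2)

lemma mul_list_prod_of_mem (hl : ∀ p ∈ l, IsStarProjection p)
    (hcomm : ∀ p ∈ l, ∀ q ∈ l, Commute p q) {p : E →L[𝕜] E} (hp : p ∈ l) :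
    p * l.prod = l.prod := by
  induction l with
  | nil => simp at hp
  | cons r l ih =>
    simp only [List.mem_cons, forall_eq_or_imp] at hl hcomm hp
    rw [List.prod_cons]
    rcases hp with rfl | hp
    · rw [← mul_assoc, hl.1.isIdempotentElem.eq]
    · rw [← mul_assoc, (hcomm.2 p hp).1.eq, mul_assoc,
        ih hl.2 (fun q hq s hs => (hcomm.2 q hq).2 s hs) hp]

lemma norm_sq_sub_list_prod_apply_le (hl : ∀ p ∈ l, IsStarProjection p)
    (hcomm : ∀ p ∈ l, ∀ q ∈ l, Commute p q) (x : E) :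
    ‖x - l.prod x‖ ^ 2 ≤ (l.map fun p => ‖x - p x‖ ^ 2).sum := by
  induction l with
  | nil => simp
  | cons p l ih =>
    simp only [List.mem_cons, forall_eq_or_imp] at hl hcomm
    have hl' := fun q hq r hr => (hcomm.2 q hq).2 r hr
    rw [List.prod_cons, List.map_cons, List.sum_cons]
    calc ‖x - (p * l.prod) x‖ ^ 2 ≤ ‖x - p x‖ ^ 2 + ‖x - l.prod x‖ ^ 2 :=
          norm_sq_sub_mul_apply_le (list_prod hl.2 hl') (Commute.list_prod_right l p hcomm.1.2) x
      _ ≤ _ := by gcongr; exact ih hl.2 hl'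

lemma norm_sq_apply_le_norm_sq_sub_apply_add (hq : IsStarProjection q) (hr : IsStarProjection r)
    {ε : ℝ} (hε : 0 ≤ ε) {x : E} (hx : ‖x‖ = 1) (h : ‖r (q x)‖ ^ 2 ≤ ε * ‖q x‖ ^ 2) :
    ‖r x‖ ^ 2 ≤ ‖x - q x‖ ^ 2 + ε + √ε := by
  set a := ‖q x‖
  set b := ‖x - q x‖
  have hab : a ^ 2 + b ^ 2 = 1 := by rw [hq.norm_sq_apply_add_norm_sq_sub_apply, hx, one_pow]
  have hrq : ‖r (q x)‖ ≤ √ε * a := by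
    rw [← pow_le_pow_iff_left₀ (norm_nonneg _) (by positivity) two_ne_zero, mul_pow,
      Real.sq_sqrt hε]
    exact h
  have hrx : ‖r x‖ ≤ √ε * a + b :=
    calc ‖r x‖ = ‖r (q x) + r (x - q x)‖ := by rw [← map_add, add_sub_cancel]
      _ ≤ ‖r (q x)‖ + ‖r (x - q x)‖ := norm_add_le _ _
      _ ≤ √ε * a + b := add_le_add hrq (hr.norm_apply_le _)
  have hsqrt := Real.sq_sqrt hε
  have h2ab : 2 * a * b ≤ 1 := by nlinarith [sq_nonneg (a - b)]
  calc ‖r x‖ ^ 2 ≤ (√ε * a + b) ^ 2 := by gcongr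
    _ = ε * a ^ 2 + √ε * (2 * a * b) + b ^ 2 := by rw [add_sq, mul_pow, hsqrt]; ring
    _ ≤ ε * 1 + √ε * 1 + b ^ 2 := by gcongr; nlinarith
    _ = b ^ 2 + ε + √ε := by ring

end IsStarProjection

theorem average_projection_bound_general
    {E : Type*} [NormedAddCommGroup E] [InnerProductSpace ℂ E] [FiniteDimensional ℂ E]
    (T : ℕ) (P : Fin (T + 1) → (E →L[ℂ] E)) (ε : ℝ)
    (hε : 0 ≤ ε)
    (hsa : ∀ t, IsSelfAdjoint (P t))
    (hidem : ∀ t, (P t) ∘L (P t) = P t)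
    (hcomm : ∀ s t : Fin (T + 1), (s : ℕ) < T → (t : ℕ) < T →
      (P s) ∘L (P t) = (P t) ∘L (P s))
    (L : Submodule ℂ E)
    (hL : ∀ φ : E, φ ∈ L ↔ ∀ t : Fin (T + 1), (t : ℕ) < T → P t φ = φ)
    (hPT : ∀ φ ∈ L, ‖φ‖ = 1 → RCLike.re (⟪φ, P (Fin.last T) φ⟫_ℂ) ≤ ε) :
    ∀ ξ : E, ‖ξ‖ = 1 →
      (1 / ((T : ℝ) + 1)) * ∑ t : Fin (T + 1), RCLike.re (⟪ξ, P t ξ⟫_ℂ) ≤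
        1 - (1 - ε - Real.sqrt ε) / ((T : ℝ) + 1) := by
  intro ξ hξ
  have hP (t : Fin (T + 1)) : IsStarProjection (P t) := ⟨hidem t, hsa t⟩
  set l := List.ofFn fun i : Fin T => P i.castSucc
  have hl : ∀ p ∈ l, IsStarProjection p := by
    intro p hp
    obtain ⟨i, rfl⟩ := List.mem_ofFn.mp hp
    exact hP _
  have hlc : ∀ p ∈ l, ∀ q ∈ l, Commute p q := by
    intro p hp q hq
    obtain ⟨i, rfl⟩ := List.mem_ofFn.mp hp
    obtain ⟨j, rfl⟩ := List.mem_ofFn.mp hq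
    exact hcomm _ _ i.isLt j.isLt
  have hq := IsStarProjection.list_prod hl hlc
  have hqL : l.prod ξ ∈ L := by
    refine (hL _).mpr fun t ht => ?_
    have hmem : P t ∈ l := List.mem_ofFn.mpr ⟨⟨t, ht⟩, rfl⟩
    exact congr($(IsStarProjection.mul_list_prod_of_mem hl hlc hmem) ξ)
  have hlast : RCLike.re ⟪ξ, P (Fin.last T) ξ⟫_ℂ ≤ ‖ξ - l.prod ξ‖ ^ 2 + ε + √ε := by
    rw [(hP _).re_inner_apply_self]
    refine hq.norm_sq_apply_le_norm_sq_sub_apply_add (hP _) hε hξ ?_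
    rw [← (hP _).re_inner_apply_self]
    exact re_inner_apply_self_le_mul_norm_sq hPT hqL
  have hfirst : ∑ i : Fin T, RCLike.re ⟪ξ, P i.castSucc ξ⟫_ℂ ≤ T - ‖ξ - l.prod ξ‖ ^ 2 :=
    calc ∑ i : Fin T, RCLike.re ⟪ξ, P i.castSucc ξ⟫_ℂ
        = T - ∑ i : Fin T, ‖ξ - P i.castSucc ξ‖ ^ 2 := by
          simp [(hP _).re_inner_apply_self_eq_sub, hξ, Finset.sum_sub_distrib]
      _ ≤ T - ‖ξ - l.prod ξ‖ ^ 2 := by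
          gcongr
          simpa [l, List.sum_ofFn] using
            IsStarProjection.norm_sq_sub_list_prod_apply_le hl hlc ξ
  have hsum : ∑ t, RCLike.re ⟪ξ, P t ξ⟫_ℂ ≤ T + ε + √ε := by
    rw [Fin.sum_univ_castSucc]; linarith
  calc (1 / ((T : ℝ) + 1)) * ∑ t, RCLike.re ⟪ξ, P t ξ⟫_ℂ ≤ (1 / ((T : ℝ) + 1)) * (T + ε + √ε) := by
        gcongr
    _ = 1 - (1 - ε - √ε) / ((T : ℝ) + 1) := by field_simp; ring

/-- Soundness geometric bound: let `P 0, …, P T` be orthogonal projections on a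
finite-dimensional complex Hilbert space such that the `P t` for `t < T` mutually
commute, and let `L` be their common `+1`-eigenspace.  If `⟪φ, P T φ⟫ ≤ ε` for all
unit vectors `φ ∈ L`, then for every unit vector `ξ`,
`(1/(T+1)) ∑_t ⟪ξ, P t ξ⟫ ≤ 1 - (1 - ε - √ε)/(T+1)`. -/
theorem average_projection_bound
    {E : Type*} [NormedAddCommGroup E] [InnerProductSpace ℂ E] [FiniteDimensional ℂ E]
    (T : ℕ) (hT : 0 < T) (P : Fin (T + 1) → (E →L[ℂ] E)) (ε : ℝ)
    (hε : 0 ≤ ε) (hε1 : ε ≤ 1)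
    (hsa : ∀ t, IsSelfAdjoint (P t))
    (hidem : ∀ t, (P t) ∘L (P t) = P t)
    (hcomm : ∀ s t : Fin (T + 1), (s : ℕ) < T → (t : ℕ) < T →
      (P s) ∘L (P t) = (P t) ∘L (P s))
    (L : Submodule ℂ E)
    (hL : ∀ φ : E, φ ∈ L ↔ ∀ t : Fin (T + 1), (t : ℕ) < T → P t φ = φ)
    (hPT : ∀ φ ∈ L, ‖φ‖ = 1 → RCLike.re (⟪φ, P (Fin.last T) φ⟫_ℂ) ≤ ε) :
    ∀ ξ : E, ‖ξ‖ = 1 →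
      (1 / ((T : ℝ) + 1)) * ∑ t : Fin (T + 1), RCLike.re (⟪ξ, P t ξ⟫_ℂ) ≤
        1 - (1 - ε - Real.sqrt ε) / ((T : ℝ) + 1) :=
  average_projection_bound_general T P ε hε hsa hidem hcomm L hL hPT
end

section
/- Let H₁, H₂ be positive semidefinite operators on a finite-dimensional complex Hilbert space with nonempty null spaces L₁ and L₂, let v be the minimum of the smallest nonzero eigenvalues of H₁ and H₂, and let cos²θ = max over unit vectors η ∈ L₂ of ⟨η|P_{L₁}|η⟩ < 1, where P_{L₁} is the orthogonal projection onto L₁. Then H₁ + H₂ ≥ 2v·sin²(θ/2) (as operators). -/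
/-!
Write `Pᵢ` for the orthogonal projection onto `Lᵢ = ker Hᵢ`. Expanding in an eigenbasis, the
spectral gap gives `Re ⟪Hᵢ x, x⟫ ≥ v ‖x - Pᵢ x‖² = v (‖x‖² - ‖Pᵢ x‖²)`. The angle condition gives
`Re ⟪P₁ x, P₂ x⟫ ≤ cos θ ‖P₁ x‖ ‖P₂ x‖`, hence `‖P₁ x + P₂ x‖² ≤ (1 + cos θ) (‖P₁ x‖² + ‖P₂ x‖²)`;
together with `‖P₁ x‖² + ‖P₂ x‖² = Re ⟪P₁ x + P₂ x, x⟫ ≤ ‖P₁ x + P₂ x‖ ‖x‖` this yields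
`‖P₁ x‖² + ‖P₂ x‖² ≤ (1 + cos θ) ‖x‖²`. Summing the two spectral bounds,
`Re ⟪(H₁ + H₂) x, x⟫ ≥ v (1 - cos θ) ‖x‖² = 2 v sin²(θ/2) ‖x‖²`.
-/

open scoped InnerProductSpace
open RCLike

namespace LinearMap.IsSymmetric

variable {𝕜 E : Type*} [RCLike 𝕜] [NormedAddCommGroup E] [InnerProductSpace 𝕜 E]
  [FiniteDimensional 𝕜 E] {T : E →ₗ[𝕜] E}

theorem re_inner_apply_self_eq_sum (hT : T.IsSymmetric) {n : ℕ} (hn : Module.finrank 𝕜 E = n)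
    (x : E) :
    re ⟪T x, x⟫_𝕜 = ∑ i, hT.eigenvalues hn i * ‖⟪hT.eigenvectorBasis hn i, x⟫_𝕜‖ ^ 2 := by
  rw [← (hT.eigenvectorBasis hn).sum_inner_mul_inner, map_sum]
  refine Finset.sum_congr rfl fun i _ => ?_
  rw [hT, apply_eigenvectorBasis, inner_smul_right, ← inner_conj_symm x, mul_assoc,
    RCLike.conj_mul, ← ofReal_pow, ← ofReal_mul, ofReal_re]

theorem mul_norm_sq_le_re_inner_apply_self (hT : T.IsSymmetric) {v : ℝ}
    (hv : ∀ μ ∈ spectrum 𝕜 T, μ ≠ 0 → v ≤ re μ) {y : E} (hy : y ∈ (ker T)ᗮ) :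
    v * ‖y‖ ^ 2 ≤ re ⟪T y, y⟫_𝕜 := by
  set b := hT.eigenvectorBasis rfl
  rw [hT.re_inner_apply_self_eq_sum rfl, ← b.sum_sq_norm_inner_right, Finset.mul_sum]
  refine Finset.sum_le_sum fun i _ => ?_
  by_cases hμ : hT.eigenvalues rfl i = 0
  · have hker : b i ∈ ker T := by simp [b, hμ]
    simp [b, Submodule.inner_right_of_mem_orthogonal hker hy]
  · have hμv := hv _ (hT.hasEigenvalue_eigenvalues rfl i).mem_spectrum (by exact_mod_cast hμ)
    rw [ofReal_re] at hμv
    exact mul_le_mul_of_nonneg_right hμv (sq_nonneg _)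

theorem inner_apply_starProjection_orthogonal_ker (hT : T.IsSymmetric) (x : E) :
    ⟪T ((ker T)ᗮ.starProjection x), (ker T)ᗮ.starProjection x⟫_𝕜 = ⟪T x, x⟫_𝕜 := by
  set y := (ker T)ᗮ.starProjection x
  have hTk : T ((ker T).starProjection x) = 0 := (ker T).starProjection_apply_mem x
  have hx : x = (ker T).starProjection x + y :=
    ((ker T).starProjection_add_starProjection_orthogonal x).symm
  conv_rhs => rw [hx]
  rw [map_add, hTk, zero_add, inner_add_right, hT y ((ker T).starProjection x), hTk,
    inner_zero_right, zero_add]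

theorem mul_norm_sq_sub_norm_sq_starProjection_ker_le (hT : T.IsSymmetric) {v : ℝ}
    (hv : ∀ μ ∈ spectrum 𝕜 T, μ ≠ 0 → v ≤ re μ) (x : E) :
    v * (‖x‖ ^ 2 - ‖(ker T).starProjection x‖ ^ 2) ≤ re ⟪T x, x⟫_𝕜 := by
  rw [(ker T).norm_sq_eq_add_norm_sq_starProjection x, add_sub_cancel_left,
    ← hT.inner_apply_starProjection_orthogonal_ker x]
  exact hT.mul_norm_sq_le_re_inner_apply_self hv ((ker T)ᗮ.starProjection_apply_mem x)

end LinearMap.IsSymmetric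

namespace Submodule

variable {𝕜 E : Type*} [RCLike 𝕜] [NormedAddCommGroup E] [InnerProductSpace 𝕜 E]
  {K₁ K₂ : Submodule 𝕜 E} [K₁.HasOrthogonalProjection] {c : ℝ}

theorem re_inner_le_of_norm_starProjection_le (h : ∀ w ∈ K₂, ‖K₁.starProjection w‖ ≤ c * ‖w‖)
    {u w : E} (hu : u ∈ K₁) (hw : w ∈ K₂) : re ⟪u, w⟫_𝕜 ≤ c * (‖u‖ * ‖w‖) :=
  calc re ⟪u, w⟫_𝕜 = re ⟪u, K₁.starProjection w⟫_𝕜 := by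
        rw [← K₁.inner_starProjection_left_eq_right, starProjection_eq_self_iff.mpr hu]
    _ ≤ ‖u‖ * ‖K₁.starProjection w‖ := (re_le_norm _).trans (norm_inner_le_norm _ _)
    _ ≤ ‖u‖ * (c * ‖w‖) := mul_le_mul_of_nonneg_left (h w hw) (norm_nonneg u)
    _ = c * (‖u‖ * ‖w‖) := by ring

theorem norm_sq_starProjection_add_norm_sq_starProjection_le [K₂.HasOrthogonalProjection]
    (hc : 0 ≤ c) (h : ∀ w ∈ K₂, ‖K₁.starProjection w‖ ≤ c * ‖w‖) (x : E) :
    ‖K₁.starProjection x‖ ^ 2 + ‖K₂.starProjection x‖ ^ 2 ≤ (1 + c) * ‖x‖ ^ 2 := by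
  set u := K₁.starProjection x
  set w := K₂.starProjection x
  set s := ‖u‖ ^ 2 + ‖w‖ ^ 2
  have hs : s ≤ ‖u + w‖ * ‖x‖ :=
    calc s = re ⟪u + w, x⟫_𝕜 := by
          rw [inner_add_left, map_add, re_inner_starProjection_eq_normSq,
            re_inner_starProjection_eq_normSq, coe_norm, coe_norm, ← starProjection_apply,
            ← starProjection_apply]
      _ ≤ ‖u + w‖ * ‖x‖ := (re_le_norm _).trans (norm_inner_le_norm _ _)
  have huw : ‖u + w‖ ^ 2 ≤ (1 + c) * s := by
    have hinner := re_inner_le_of_norm_starProjection_le h (K₁.starProjection_apply_mem x)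
      (K₂.starProjection_apply_mem x)
    rw [norm_add_sq (𝕜 := 𝕜)]
    nlinarith [mul_nonneg hc (sq_nonneg (‖u‖ - ‖w‖))]
  -- AM-GM: `2 (1 + c) ‖u + w‖ ‖x‖ ≤ ‖u + w‖ ^ 2 + (1 + c) ^ 2 ‖x‖ ^ 2`
  nlinarith [sq_nonneg (‖u + w‖ - (1 + c) * ‖x‖),
    mul_le_mul_of_nonneg_left hs (by linarith : 0 ≤ 1 + c)]

end Submodule

theorem ContinuousLinearMap.norm_apply_le_mul_norm_of_unit_norm {𝕜 E F : Type*} [RCLike 𝕜]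
    [NormedAddCommGroup E] [NormedSpace 𝕜 E] [NormedAddCommGroup F] [NormedSpace 𝕜 F]
    (f : E →L[𝕜] F) {K : Submodule 𝕜 E} {c : ℝ} (hc : 0 ≤ c)
    (h : ∀ η ∈ K, ‖η‖ = 1 → ‖f η‖ ≤ c) {w : E} (hw : w ∈ K) : ‖f w‖ ≤ c * ‖w‖ :=
  have hnorm : ‖f.comp K.subtypeL‖ ≤ c :=
    opNorm_le_of_unit_norm hc fun η hη => h η η.2 hη
  (le_opNorm (f.comp K.subtypeL) ⟨w, hw⟩).trans (mul_le_mul_of_nonneg_right hnorm (norm_nonneg _))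

theorem ContinuousLinearMap.isPositive_sub_smul_one_of_le {𝕜 E : Type*} [RCLike 𝕜]
    [NormedAddCommGroup E] [InnerProductSpace 𝕜 E] {A : E →L[𝕜] E} (hA : A.IsSymmetric) {k : ℝ}
    (h : ∀ x, k * ‖x‖ ^ 2 ≤ re ⟪A x, x⟫_𝕜) : (A - (k : 𝕜) • 1).IsPositive := by
  refine ⟨hA.sub (LinearMap.IsSymmetric.id.smul (conj_ofReal k)), fun x => ?_⟩
  have hk : re ⟪((k : 𝕜) • 1 : E →L[𝕜] E) x, x⟫_𝕜 = k * ‖x‖ ^ 2 := by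
    rw [smul_apply, one_apply_eq_self, inner_smul_left, conj_ofReal, inner_self_eq_norm_sq_to_K,
      ← ofReal_pow, ← ofReal_mul, ofReal_re]
  rw [reApplyInnerSelf_apply, sub_apply, inner_sub_left, map_sub, hk]
  exact sub_nonneg.mpr (h x)

theorem geometric_lemma_general
    {E : Type*} [NormedAddCommGroup E] [InnerProductSpace ℂ E] [FiniteDimensional ℂ E]
    (H₁ H₂ : E →L[ℂ] E) (hH₁ : H₁.IsPositive) (hH₂ : H₂.IsPositive)
    (v : ℝ) (hv : 0 < v)
    (hv₁ : ∀ μ ∈ spectrum ℂ H₁, μ ≠ 0 → v ≤ μ.re)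
    (hv₂ : ∀ μ ∈ spectrum ℂ H₂, μ ≠ 0 → v ≤ μ.re)
    (θ : ℝ) (hθ : θ ∈ Set.Ioc 0 (Real.pi / 2))
    (hcos : ∀ η ∈ LinearMap.ker (H₂ : E →ₗ[ℂ] E), ‖η‖ = 1 →
      ‖(Submodule.orthogonalProjectionOnto (LinearMap.ker (H₁ : E →ₗ[ℂ] E)) η : E)‖ ^ 2 ≤ Real.cos θ ^ 2) :
    (H₁ + H₂ - ((2 * v * Real.sin (θ / 2) ^ 2 : ℝ) : ℂ) • 1).IsPositive := by
  have hc : 0 ≤ Real.cos θ :=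
    Real.cos_nonneg_of_mem_Icc ⟨by linarith [hθ.1, Real.pi_pos], hθ.2⟩
  have hsin : 2 * v * Real.sin (θ / 2) ^ 2 = v * (1 - Real.cos θ) := by
    have hcos2 := Real.cos_two_mul_eq_one_sub (θ / 2)
    rw [mul_div_cancel₀ θ two_ne_zero] at hcos2
    rw [hcos2]; ring
  have hangle : ∀ w ∈ LinearMap.ker (H₂ : E →ₗ[ℂ] E),
      ‖(LinearMap.ker (H₁ : E →ₗ[ℂ] E)).starProjection w‖ ≤ Real.cos θ * ‖w‖ := fun w hw =>
    ContinuousLinearMap.norm_apply_le_mul_norm_of_unit_norm _ hc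
      (fun η hη hη1 => (sq_le_sq₀ (norm_nonneg _) hc).1 (hcos η hη hη1)) hw
  refine ContinuousLinearMap.isPositive_sub_smul_one_of_le (k := 2 * v * Real.sin (θ / 2) ^ 2)
    (hH₁.add hH₂).isSymmetric fun x => ?_
  have h₁ := hH₁.isSymmetric.mul_norm_sq_sub_norm_sq_starProjection_ker_le
    (ContinuousLinearMap.spectrum_eq (f := H₁) ▸ hv₁) x
  have h₂ := hH₂.isSymmetric.mul_norm_sq_sub_norm_sq_starProjection_ker_le
    (ContinuousLinearMap.spectrum_eq (f := H₂) ▸ hv₂) x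
  have hsum := Submodule.norm_sq_starProjection_add_norm_sq_starProjection_le hc hangle x
  rw [ContinuousLinearMap.coe_coe] at h₁ h₂
  rw [add_apply, inner_add_left, map_add, hsin]
  nlinarith [mul_le_mul_of_nonneg_left hsum hv.le]

/-- Kitaev's geometric lemma: if `H₁, H₂ ⪰ 0` have nonzero kernels `L₁, L₂`, `v > 0`
lower-bounds all nonzero eigenvalues of both, and
`max_{η ∈ L₂, ‖η‖ = 1} ‖P_{L₁} η‖² ≤ cos² θ` with `θ ∈ (0, π/2]`, then
`H₁ + H₂ ⪰ 2 v sin²(θ/2) · I`. -/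
theorem geometric_lemma
    {E : Type*} [NormedAddCommGroup E] [InnerProductSpace ℂ E] [FiniteDimensional ℂ E]
    (H₁ H₂ : E →L[ℂ] E) (hH₁ : H₁.IsPositive) (hH₂ : H₂.IsPositive)
    (hL₁ : LinearMap.ker (H₁ : E →ₗ[ℂ] E) ≠ ⊥) (hL₂ : LinearMap.ker (H₂ : E →ₗ[ℂ] E) ≠ ⊥)
    (v : ℝ) (hv : 0 < v)
    (hv₁ : ∀ μ ∈ spectrum ℂ H₁, μ ≠ 0 → v ≤ μ.re)
    (hv₂ : ∀ μ ∈ spectrum ℂ H₂, μ ≠ 0 → v ≤ μ.re)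
    (θ : ℝ) (hθ : θ ∈ Set.Ioc 0 (Real.pi / 2))
    (hcos : ∀ η ∈ LinearMap.ker (H₂ : E →ₗ[ℂ] E), ‖η‖ = 1 →
      ‖(Submodule.orthogonalProjectionOnto (LinearMap.ker (H₁ : E →ₗ[ℂ] E)) η : E)‖ ^ 2 ≤ Real.cos θ ^ 2) :
    (H₁ + H₂ - ((2 * v * Real.sin (θ / 2) ^ 2 : ℝ) : ℂ) • 1).IsPositive :=
  geometric_lemma_general H₁ H₂ hH₁ hH₂ v hv hv₁ hv₂ θ hθ hcos
end

section
/- Let H = Δ|1⟩⟨1|_w on ℂ² ⊗ K and V = H' ⊗ I_w + √(Δ/2)·C ⊗ X_w where H', C are Hermitian on K and X_w is the Pauli X on the qubit w. With Π₋ the projection onto K ⊗ |0⟩_w, G₊(z) = (z−Δ)⁻¹ Π₊, the second-order self-energy term satisfies V_{−+}G₊(z)V_{+−} = (Δ/(2(z−Δ)))·C² ⊗ |0⟩⟨0|_w exactly, for all z ≠ Δ. -/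
open scoped Kronecker

noncomputable section

/-- Projector onto `|0⟩` of a qubit. -/
def proj0 : Matrix (Fin 2) (Fin 2) ℂ := !![1, 0; 0, 0]

/-- Projector onto `|1⟩` of a qubit. -/
def proj1 : Matrix (Fin 2) (Fin 2) ℂ := !![0, 0; 0, 1]

/-- The Pauli `X` matrix. -/
def pauliX : Matrix (Fin 2) (Fin 2) ℂ := !![0, 1; 1, 0]

lemma proj0_mul_proj1 : proj0 * proj1 = 0 := by
  ext i j
  fin_cases i <;> fin_cases j <;>
    simp [proj0, proj1, Matrix.mul_apply, Fin.sum_univ_two]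

lemma proj1_mul_proj0 : proj1 * proj0 = 0 := by
  ext i j
  fin_cases i <;> fin_cases j <;>
    simp [proj0, proj1, Matrix.mul_apply, Fin.sum_univ_two]

lemma key2 : proj0 * pauliX * proj1 * proj1 * (proj1 * pauliX * proj0) = proj0 := by
  ext i j
  fin_cases i <;> fin_cases j <;>
    simp [proj0, proj1, pauliX, Matrix.mul_apply, Fin.sum_univ_two]

/-- Subdivision gadget, second order: with `H = Δ |1⟩⟨1|_w`,
`V = H' ⊗ I + √(Δ/2) C ⊗ X_w`, `Π₋ = I ⊗ |0⟩⟨0|`, `Π₊ = I ⊗ |1⟩⟨1|` and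
`G₊(z) = (z - Δ)⁻¹ Π₊`, one has
`V₋₊ G₊(z) V₊₋ = (Δ / (2(z - Δ))) C² ⊗ |0⟩⟨0|` exactly, for all `z ≠ Δ`. -/
theorem subdivision_gadget_second_order
    {n : Type*} [Fintype n] [DecidableEq n]
    (Hel C : Matrix n n ℂ) (hHel : Hel.IsHermitian) (hC : C.IsHermitian)
    (Δ : ℝ) (hΔ : 0 ≤ Δ) (z : ℂ) (hz : z ≠ (Δ : ℂ)) :
    (((1 : Matrix n n ℂ) ⊗ₖ proj0) *
        (Hel ⊗ₖ (1 : Matrix (Fin 2) (Fin 2) ℂ)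
          + ((Real.sqrt (Δ / 2) : ℝ) : ℂ) • (C ⊗ₖ pauliX)) *
        ((1 : Matrix n n ℂ) ⊗ₖ proj1)) *
      ((z - (Δ : ℂ))⁻¹ • ((1 : Matrix n n ℂ) ⊗ₖ proj1)) *
      (((1 : Matrix n n ℂ) ⊗ₖ proj1) *
        (Hel ⊗ₖ (1 : Matrix (Fin 2) (Fin 2) ℂ)
          + ((Real.sqrt (Δ / 2) : ℝ) : ℂ) • (C ⊗ₖ pauliX)) *
        ((1 : Matrix n n ℂ) ⊗ₖ proj0)) =
      ((Δ : ℂ) / (2 * (z - (Δ : ℂ)))) • ((C ^ 2) ⊗ₖ proj0) := by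
  have hs : (((Real.sqrt (Δ / 2) : ℝ) : ℂ)) * ((Real.sqrt (Δ / 2) : ℝ) : ℂ)
      = (Δ : ℂ) / 2 := by
    rw [← Complex.ofReal_mul, Real.mul_self_sqrt (by linarith)]
    push_cast; ring
  simp only [mul_add, add_mul, Matrix.mul_smul, Matrix.smul_mul,
    ← Matrix.mul_kronecker_mul, Matrix.one_mul, Matrix.mul_one,
    proj0_mul_proj1, proj1_mul_proj0, Matrix.kronecker_zero, smul_zero,
    zero_add, add_zero, Matrix.zero_mul, Matrix.mul_zero]
  rw [key2, smul_smul, smul_smul, sq C]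
  congr 1
  rw [mul_comm (((Real.sqrt (Δ / 2) : ℝ) : ℂ)) ((z - (Δ : ℂ))⁻¹), mul_assoc, hs]
  field_simp [sub_ne_zero.mpr hz]

end
end
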